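/- arXiv:2012.14028 — 7 statements merged into one kernel-verified Lean document; each statement's English description precedes it below -/
import Mathlib

section
/- Fix n, r, d ∈ ℕ, matrices U ∈ Matrix (Fin n) (Fin r) ℝ with Uᵀ*U = 1, Y ∈ Matrix (Fin d) (Fin r) ℝ with C := Yᵀ*Y invertible, L ∈ Matrix (Fin n) (Fin n) ℝ, F ∈ Matrix (Fin n) (Fin d) ℝ, and a skew-symmetric Φ ∈ Matrix (Fin r) (Fin r) ℝ. Write L_r := Uᵀ*L*U and define A* := L*U - U*L_r + (1 - U*Uᵀ)*F*Y*C⁻¹ + U*Φ and B* := Y*L_rᵀ + Fᵀ*U + Y*Φ. Then Uᵀ*A* = Φ, and for every A ∈ Matrix (Fin n) (Fin r) ℝ with Uᵀ*A = Φ and every B ∈ Matrix (Fin d) (Fin r) ℝ, the Frobenius norm satisfies ‖A**Yᵀ + U*(B*)ᵀ - L*U*Yᵀ - F‖_F ≤ ‖A*Yᵀ + U*Bᵀ - L*U*Yᵀ - F‖_F. That is, (A*, B*) is a global minimizer of the f-OTD variational principle 𝓕(U̇, Ẏ) = ‖d/dt(UYᵀ) - L U Yᵀ - F‖_F² over all admissible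 derivative pairs satisfying the orthonormality-rate constraint UᵀU̇ = Φ. -/
/-!
The residual `E* = A* Yᵀ + U B*ᵀ - L U Yᵀ - F` of the f-OTD pair equals
`(1 - U Uᵀ) F (Y C⁻¹ Yᵀ - 1)`, so `Uᵀ E* = 0` and `E* Y = 0`. Hence `E*` is
Frobenius-orthogonal to every tangent direction `A Yᵀ + U Bᵀ`, and since the residual of any
pair `(A, B)` is `E*` plus such a direction, Pythagoras shows that no pair does better than
`(A*, B*)`.
-/

open Matrix

/-- The Frobenius norm of a real matrix, `‖M‖_F = sqrt (trace (Mᵀ M))`. -/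
noncomputable def frobNorm {n d : ℕ} (M : Matrix (Fin n) (Fin d) ℝ) : ℝ :=
  Real.sqrt (Matrix.trace (Mᵀ * M))

section TraceForm

variable {m k l R : Type*} [Fintype m] [Fintype k] [Fintype l]

lemma trace_transpose_mul_self_nonneg (D : Matrix m k ℝ) : 0 ≤ trace (Dᵀ * D) := by
  simpa [conjTranspose_eq_transpose_of_trivial] using
    (posSemidef_conjTranspose_mul_self D).trace_nonneg

lemma trace_transpose_mul_add_self {E D : Matrix m k ℝ} (h : trace (Eᵀ * D) = 0) :
    trace ((E + D)ᵀ * (E + D)) = trace (Eᵀ * E) + trace (Dᵀ * D) := by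
  have h' : trace (Dᵀ * E) = 0 := by
    rw [← trace_transpose, transpose_mul, transpose_transpose, h]
  rw [transpose_add, Matrix.add_mul, Matrix.mul_add, Matrix.mul_add, trace_add, trace_add,
    trace_add, h, h']
  ring

lemma frobNorm_le_frobNorm_add {n d : ℕ} {E D : Matrix (Fin n) (Fin d) ℝ}
    (h : trace (Eᵀ * D) = 0) : frobNorm E ≤ frobNorm (E + D) := by
  unfold frobNorm
  rw [trace_transpose_mul_add_self h]
  exact Real.sqrt_le_sqrt (le_add_of_nonneg_right (trace_transpose_mul_self_nonneg D))

variable [CommRing R]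

lemma trace_transpose_mul_add_mul_eq_zero {E : Matrix m k R} {U : Matrix m l R}
    {Y : Matrix k l R} (hUE : Uᵀ * E = 0) (hEY : E * Y = 0) (A : Matrix m l R)
    (B : Matrix k l R) : trace (Eᵀ * (A * Yᵀ + U * Bᵀ)) = 0 := by
  have hEU : Eᵀ * U = 0 := by
    simpa only [transpose_mul, transpose_transpose, transpose_zero] using congrArg transpose hUE
  rw [Matrix.mul_add, trace_add, ← Matrix.mul_assoc, trace_mul_cycle, ← transpose_mul, hEY,
    ← Matrix.mul_assoc, hEU]
  simp

end TraceForm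

section Projections

variable {m k l R : Type*} [Fintype m] [Fintype l] [DecidableEq m] [DecidableEq l] [CommRing R]

lemma transpose_mul_one_sub_mul_transpose {U : Matrix m l R} (hU : Uᵀ * U = 1) :
    Uᵀ * (1 - U * Uᵀ) = 0 := by
  rw [Matrix.mul_sub, Matrix.mul_one, ← Matrix.mul_assoc, hU, Matrix.one_mul, sub_self]

lemma mul_inv_mul_transpose_sub_one_mul [Fintype k] [DecidableEq k] {Y : Matrix k l R}
    (hC : IsUnit (Yᵀ * Y).det) : (Y * (Yᵀ * Y)⁻¹ * Yᵀ - 1) * Y = 0 := by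
  rw [Matrix.sub_mul, Matrix.one_mul, Matrix.mul_assoc, Matrix.mul_assoc,
    nonsing_inv_mul _ hC, Matrix.mul_one, sub_self]

end Projections

section Residual

variable {n r d R : Type*} [Fintype n] [Fintype r] [Fintype d] [DecidableEq n] [CommRing R]

lemma transpose_mul_fOTD_mode [DecidableEq r] {U : Matrix n r R} (hU : Uᵀ * U = 1)
    (L : Matrix n n R) (F : Matrix n d R) (Y : Matrix d r R) (G Φ : Matrix r r R) :
    Uᵀ * (L * U - U * (Uᵀ * L * U) + (1 - U * Uᵀ) * F * Y * G + U * Φ) = Φ := by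
  simp only [Matrix.mul_add, Matrix.mul_sub, ← Matrix.mul_assoc, hU,
    transpose_mul_one_sub_mul_transpose hU, Matrix.one_mul, Matrix.zero_mul]
  abel

/-- `Lr` cancels out, and by skew-symmetry so do the rotation terms `± U Φ Yᵀ` of modes and
coefficients; `G` stands for `C⁻¹`. -/
lemma fOTD_residual_eq [DecidableEq d] (U : Matrix n r R) (Y : Matrix d r R)
    (L : Matrix n n R) (F : Matrix n d R) {Φ : Matrix r r R} (hΦ : Φᵀ = -Φ)
    (Lr G : Matrix r r R) :
    (L * U - U * Lr + (1 - U * Uᵀ) * F * Y * G + U * Φ) * Yᵀ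
        + U * (Y * Lrᵀ + Fᵀ * U + Y * Φ)ᵀ - L * U * Yᵀ - F =
      (1 - U * Uᵀ) * F * (Y * G * Yᵀ - 1) := by
  simp only [transpose_add, transpose_mul, transpose_transpose, hΦ, Matrix.add_mul,
    Matrix.sub_mul, Matrix.mul_add, Matrix.mul_sub, Matrix.mul_one, Matrix.one_mul,
    Matrix.mul_neg, Matrix.neg_mul, Matrix.mul_assoc]
  abel

end Residual

/-- The f-OTD variational principle: the pair `(A*, B*)` given by the f-OTD
mode and coefficient evolution right-hand sides is a global minimizer of
`𝓕(U̇, Ẏ) = ‖d/dt (U Yᵀ) - L U Yᵀ - F‖_F²` over all admissible derivative pairs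
satisfying the orthonormality-rate constraint `Uᵀ U̇ = Φ`. -/
theorem fOTD_variational_principle {n r d : ℕ}
    (U : Matrix (Fin n) (Fin r) ℝ) (hU : Uᵀ * U = 1)
    (Y : Matrix (Fin d) (Fin r) ℝ) (hC : IsUnit (Yᵀ * Y).det)
    (L : Matrix (Fin n) (Fin n) ℝ) (F : Matrix (Fin n) (Fin d) ℝ)
    (Φ : Matrix (Fin r) (Fin r) ℝ) (hΦ : Φᵀ = -Φ)
    (C : Matrix (Fin r) (Fin r) ℝ) (hCdef : C = Yᵀ * Y)
    (Lr : Matrix (Fin r) (Fin r) ℝ) (hLr : Lr = Uᵀ * L * U)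
    (Astar : Matrix (Fin n) (Fin r) ℝ)
    (hAstar : Astar = L * U - U * Lr + (1 - U * Uᵀ) * F * Y * C⁻¹ + U * Φ)
    (Bstar : Matrix (Fin d) (Fin r) ℝ)
    (hBstar : Bstar = Y * Lrᵀ + Fᵀ * U + Y * Φ) :
    Uᵀ * Astar = Φ ∧
      ∀ (A : Matrix (Fin n) (Fin r) ℝ) (B : Matrix (Fin d) (Fin r) ℝ),
        Uᵀ * A = Φ →
        frobNorm (Astar * Yᵀ + U * Bstarᵀ - L * U * Yᵀ - F) ≤
          frobNorm (A * Yᵀ + U * Bᵀ - L * U * Yᵀ - F) := by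
  subst hCdef hLr
  refine ⟨hAstar ▸ transpose_mul_fOTD_mode hU L F Y _ Φ, fun A B _ => ?_⟩
  set E := Astar * Yᵀ + U * Bstarᵀ - L * U * Yᵀ - F with hE
  have hres : E = (1 - U * Uᵀ) * F * (Y * (Yᵀ * Y)⁻¹ * Yᵀ - 1) := by
    rw [hE, hAstar, hBstar]
    exact fOTD_residual_eq U Y L F hΦ _ _
  have hUE : Uᵀ * E = 0 := by
    rw [hres, ← Matrix.mul_assoc, ← Matrix.mul_assoc, transpose_mul_one_sub_mul_transpose hU,
      Matrix.zero_mul, Matrix.zero_mul]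
  have hEY : E * Y = 0 := by
    rw [hres, Matrix.mul_assoc, mul_inv_mul_transpose_sub_one_mul hC, Matrix.mul_zero]
  calc frobNorm E
      ≤ frobNorm (E + ((A - Astar) * Yᵀ + U * (B - Bstar)ᵀ)) :=
        frobNorm_le_frobNorm_add (trace_transpose_mul_add_mul_eq_zero hUE hEY _ _)
    _ = frobNorm (A * Yᵀ + U * Bᵀ - L * U * Yᵀ - F) := by
        rw [hE]
        congr 1
        simp only [Matrix.sub_mul, Matrix.mul_sub, transpose_sub]
        abel
end

section
/- Fix n, r, d ∈ ℕ, matrices U ∈ Matrix (Fin n) (Fin r) ℝ with Uᵀ*U = 1, Y ∈ Matrix (Fin d) (Fin r) ℝ with C := Yᵀ*Y invertible, L ∈ Matrix (Fin n) (Fin n) ℝ, F ∈ Matrix (Fin n) (Fin d) ℝ. Suppose matrices A ∈ Matrix (Fin n) (Fin r) ℝ, B ∈ Matrix (Fin d) (Fin r) ℝ and λ ∈ Matrix (Fin r) (Fin r) ℝ satisfy: (i) Uᵀ*A = Φ for a skew-symmetric Φ; (ii) the first-order optimality condition with respect to the mode rate, 2*(A*Yᵀ + U*Bᵀ - L*U*Yᵀ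 - F)*Y + U*λ = 0; and (iii) the first-order optimality condition with respect to the coefficient rate, Uᵀ*(A*Yᵀ + U*Bᵀ - L*U*Yᵀ - F) = 0. Then, writing L_r := Uᵀ*L*U, necessarily A = L*U - U*L_r + (1 - U*Uᵀ)*F*Y*C⁻¹ + U*Φ and B = Y*L_rᵀ + Fᵀ*U + Y*Φ. -/
open Matrix

/-!
Multiplying the mode condition on the left by `Uᵀ` and using the coefficient condition
`Uᵀ R = 0` for the residual `R = A Yᵀ + U Bᵀ - L U Yᵀ - F` shows that the multiplier vanishes,
so `R Y = 0`. The coefficient condition, together with `Uᵀ A = Φ`, is linear in `B` and solves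
for `Bᵀ`; substituting it into `R Y = 0` leaves `A (Yᵀ Y)` explicit, and `Yᵀ Y` is invertible.
-/

section

variable {α : Type*} [CommRing α] {m n k p r : Type*} [Fintype n] [Fintype r]

theorem Matrix.eq_zero_of_mul_add_mul_eq_zero [Fintype m] [DecidableEq m] [Fintype k]
    {P : Matrix m n α} {U : Matrix n m α} {R : Matrix n k α} {X : Matrix k p α} {Λ : Matrix m p α}
    (hPU : P * U = 1) (hPR : P * R = 0) (h : R * X + U * Λ = 0) : Λ = 0 := by
  simpa [Matrix.mul_add, ← Matrix.mul_assoc, hPU, hPR] using congrArg (P * ·) h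

theorem transpose_coeff_rate_eq [DecidableEq r] {U A : Matrix n r α} {Y B : Matrix k r α}
    {L : Matrix n n α} {F : Matrix n k α} {Φ : Matrix r r α}
    (hU : Uᵀ * U = 1) (hUA : Uᵀ * A = Φ)
    (h : Uᵀ * (A * Yᵀ + U * Bᵀ - L * U * Yᵀ - F) = 0) :
    Bᵀ = Uᵀ * L * U * Yᵀ + Uᵀ * F - Φ * Yᵀ := by
  simp only [Matrix.mul_sub, Matrix.mul_add, ← Matrix.mul_assoc, hUA, hU,
    Matrix.one_mul] at h
  rw [← sub_eq_zero, ← h]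
  abel

theorem coeff_rate_eq {U : Matrix n r α} {Y B : Matrix k r α}
    {L : Matrix n n α} {F : Matrix n k α} {Φ : Matrix r r α} (hΦ : Φᵀ = -Φ)
    (hB : Bᵀ = Uᵀ * L * U * Yᵀ + Uᵀ * F - Φ * Yᵀ) :
    B = Y * (Uᵀ * L * U)ᵀ + Fᵀ * U + Y * Φ := by
  rw [← transpose_transpose B, hB]
  simp only [transpose_sub, transpose_add, transpose_mul, transpose_transpose, hΦ,
    Matrix.mul_neg, sub_neg_eq_add]

theorem mode_rate_eq [Fintype k] [DecidableEq n] [DecidableEq r]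
    {U A : Matrix n r α} {Y B : Matrix k r α}
    {L : Matrix n n α} {F : Matrix n k α} {Φ : Matrix r r α}
    (hC : IsUnit (Yᵀ * Y).det) (hB : Bᵀ = Uᵀ * L * U * Yᵀ + Uᵀ * F - Φ * Yᵀ)
    (h : (A * Yᵀ + U * Bᵀ - L * U * Yᵀ - F) * Y = 0) :
    A = L * U - U * (Uᵀ * L * U) + (1 - U * Uᵀ) * F * Y * (Yᵀ * Y)⁻¹ + U * Φ := by
  have hAC : A * (Yᵀ * Y) =
      (L * U - U * (Uᵀ * L * U) + U * Φ) * (Yᵀ * Y) + (1 - U * Uᵀ) * F * Y := by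
    rw [hB] at h
    simp only [Matrix.sub_mul, Matrix.add_mul, Matrix.mul_sub, Matrix.mul_add,
      Matrix.one_mul, Matrix.mul_assoc] at h ⊢
    rw [← sub_eq_zero, ← h]
    abel
  calc A = A * (Yᵀ * Y) * (Yᵀ * Y)⁻¹ := by
        rw [Matrix.mul_assoc, mul_nonsing_inv _ hC, Matrix.mul_one]
    _ = _ := by
        rw [hAC, Matrix.add_mul, Matrix.mul_assoc _ (Yᵀ * Y), mul_nonsing_inv _ hC,
          Matrix.mul_one]
        abel

end

/-- Appendix A of the paper: the first-order optimality (stationarity) conditions of the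
f-OTD Lagrangian determine the closed-form f-OTD evolution equations for the modes
(Equation 8) and coefficients (Equation 9). -/
theorem fOTD_optimality_conditions {n r d : ℕ}
    (U : Matrix (Fin n) (Fin r) ℝ) (hU : Uᵀ * U = 1)
    (Y : Matrix (Fin d) (Fin r) ℝ) (hC : IsUnit (Yᵀ * Y).det)
    (L : Matrix (Fin n) (Fin n) ℝ) (F : Matrix (Fin n) (Fin d) ℝ)
    (A : Matrix (Fin n) (Fin r) ℝ) (B : Matrix (Fin d) (Fin r) ℝ)
    (lam : Matrix (Fin r) (Fin r) ℝ)
    (Φ : Matrix (Fin r) (Fin r) ℝ) (hΦ : Φᵀ = -Φ)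
    (hconstraint : Uᵀ * A = Φ)
    (hmode : (2 : ℝ) • ((A * Yᵀ + U * Bᵀ - L * U * Yᵀ - F) * Y) + U * lam = 0)
    (hcoeff : Uᵀ * (A * Yᵀ + U * Bᵀ - L * U * Yᵀ - F) = 0) :
    A = L * U - U * (Uᵀ * L * U) + (1 - U * Uᵀ) * F * Y * (Yᵀ * Y)⁻¹ + U * Φ ∧
      B = Y * (Uᵀ * L * U)ᵀ + Fᵀ * U + Y * Φ := by
  have hlam : lam = 0 :=
    Matrix.eq_zero_of_mul_add_mul_eq_zero hU hcoeff (X := (2 : ℝ) • Y)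
      (by rwa [Matrix.mul_smul])
  have hRY : (A * Yᵀ + U * Bᵀ - L * U * Yᵀ - F) * Y = 0 := by
    rw [hlam, Matrix.mul_zero, add_zero] at hmode
    exact (smul_eq_zero.mp hmode).resolve_left two_ne_zero
  have hBt := transpose_coeff_rate_eq hU hconstraint hcoeff
  exact ⟨mode_rate_eq hC hBt hRY, coeff_rate_eq hΦ hBt⟩
end

section
/- Consider an f-OTD reduction (U, Y) with gauge Φ where additionally L, F and Φ are continuous and U, Y are continuously differentiable on ℝ. If U(0)ᵀ * U(0) = 1, then U(t)ᵀ * U(t) = 1 for all t ≥ 0; that is, the f-OTD mode equation preserves orthonormality of the modes. -/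
/-!
The defect `M = UᵀU - 1` of orthonormality satisfies the linear matrix ODE
`M' = -(Φ + Sᵀ) M + M (Φ - S)` with `S = Uᵀ (L U + F Y C⁻¹)`: the tangential part of the
mode equation is removed by the projector `1 - UUᵀ` up to a multiple of `M`, and the gauge
term contributes `ΦᵀUᵀU + UᵀUΦ`, which by skew-symmetry of `Φ` is again a multiple of `M`.
The coefficients are continuous, so Grönwall's inequality and `M 0 = 0` give `M t = 0`.
-/

open Matrix

/-- Finite-dimensional f-OTD setting (see paper, Section 2.2): an f-OTD reduction with
gauge `Φ` consists of modes `U`, coefficients `Y` with invertible reduced correlation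
matrix `C = YᵀY`, satisfying the f-OTD mode and coefficient ODEs entrywise. -/

def FOTDReduction {n r d : ℕ}
    (L : ℝ → Matrix (Fin n) (Fin n) ℝ) (F : ℝ → Matrix (Fin n) (Fin d) ℝ)
    (U : ℝ → Matrix (Fin n) (Fin r) ℝ) (Y : ℝ → Matrix (Fin d) (Fin r) ℝ)
    (Φ : ℝ → Matrix (Fin r) (Fin r) ℝ) : Prop :=
  (∀ t : ℝ, (Φ t)ᵀ = -Φ t) ∧
  (∀ t : ℝ, IsUnit ((Y t)ᵀ * Y t).det) ∧
  (∀ (t : ℝ) (i : Fin n) (j : Fin r),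
    HasDerivAt (fun s => U s i j)
      (((L t * U t - U t * ((U t)ᵀ * L t * U t)
        + (1 - U t * (U t)ᵀ) * F t * Y t * ((Y t)ᵀ * Y t)⁻¹
        + U t * Φ t : Matrix (Fin n) (Fin r) ℝ)) i j) t) ∧
  (∀ (t : ℝ) (i : Fin d) (j : Fin r),
    HasDerivAt (fun s => Y s i j)
      (((Y t * ((U t)ᵀ * L t * U t)ᵀ + (F t)ᵀ * U t + Y t * Φ t
        : Matrix (Fin d) (Fin r) ℝ)) i j) t)

-- The entrywise sup norm: its topology is the product topology on `Matrix`.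
attribute [local instance] Matrix.normedAddCommGroup Matrix.normedSpace

namespace Matrix

variable {l m n R 𝕜 : Type*}

theorem transpose_mul_add_transpose_mul_eq_of_transpose_eq_neg [Fintype m] [Fintype n]
    [DecidableEq m] [DecidableEq n] [CommRing R]
    (U : Matrix m n R) (L : Matrix m m R) (G : Matrix m n R) (Φ : Matrix n n R)
    (hΦ : Φᵀ = -Φ) :
    let U' := L * U - U * (Uᵀ * L * U) + (1 - U * Uᵀ) * G + U * Φ
    let S := Uᵀ * L * U + Uᵀ * G
    U'ᵀ * U + Uᵀ * U' = -(Φ + Sᵀ) * (Uᵀ * U - 1) + (Uᵀ * U - 1) * (Φ - S) := by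
  intro U' S
  have hleft : Uᵀ * U' = (Uᵀ * U - 1) * (Φ - S) + Φ := by
    simp only [U', S, Matrix.mul_add, Matrix.mul_sub, Matrix.sub_mul, Matrix.one_mul,
      Matrix.mul_assoc]
    abel
  have hright : U'ᵀ * U = -(Φ + Sᵀ) * (Uᵀ * U - 1) - Φ := by
    rw [← transpose_transpose (U'ᵀ * U), transpose_mul, transpose_transpose, hleft]
    simp only [transpose_add, transpose_mul, transpose_sub, transpose_transpose, hΦ,
      Matrix.neg_mul, Matrix.add_mul, Matrix.sub_mul, Matrix.mul_sub, Matrix.mul_one,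
      Matrix.one_mul, Matrix.mul_assoc]
    abel
  rw [hleft, hright]
  abel

theorem _root_.Continuous.matrix_inv {X K : Type*} [TopologicalSpace X] [Fintype n]
    [DecidableEq n] [Field K] [TopologicalSpace K] [IsTopologicalDivisionRing K]
    {A : X → Matrix n n K} (hA : Continuous A) (hdet : ∀ x, IsUnit (A x).det) :
    Continuous fun x => (A x)⁻¹ :=
  continuous_iff_continuousAt.2 fun x =>
    (continuousAt_matrix_inv (A x) (by
      simpa only [Ring.inverse_eq_inv'] using continuousAt_inv₀ (hdet x).ne_zero)).comp
      hA.continuousAt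

section Deriv

variable [NontriviallyNormedField 𝕜]

theorem hasDerivAt_iff_apply [Fintype n] {f : 𝕜 → Matrix m n 𝕜} {f' : Matrix m n 𝕜} {t : 𝕜} :
    HasDerivAt f f' t ↔ ∀ i j, HasDerivAt (fun s => f s i j) (f' i j) t :=
  hasDerivAt_pi.trans (forall_congr' fun _ => hasDerivAt_pi)

theorem _root_.HasDerivAt.matrix_transpose [Fintype m] [Fintype n] {f : 𝕜 → Matrix m n 𝕜}
    {f' : Matrix m n 𝕜} {t : 𝕜} (hf : HasDerivAt f f' t) :
    HasDerivAt (fun s => (f s)ᵀ) f'ᵀ t :=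
  hasDerivAt_iff_apply.2 fun i j => hasDerivAt_iff_apply.1 hf j i

theorem _root_.HasDerivAt.matrix_mul [Fintype m] [Fintype n] {f : 𝕜 → Matrix l m 𝕜}
    {g : 𝕜 → Matrix m n 𝕜} {f' : Matrix l m 𝕜} {g' : Matrix m n 𝕜} {t : 𝕜}
    (hf : HasDerivAt f f' t) (hg : HasDerivAt g g' t) :
    HasDerivAt (fun s => f s * g s) (f' * g t + f t * g') t := by
  refine hasDerivAt_iff_apply.2 fun i j => ?_
  simp only [add_apply, mul_apply, ← Finset.sum_add_distrib]
  exact HasDerivAt.fun_sum fun k _ =>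
    (hasDerivAt_iff_apply.1 hf i k).mul (hasDerivAt_iff_apply.1 hg k j)

end Deriv

theorem norm_mul_le_card_mul [Fintype l] [Fintype m] [Fintype n] [NormedRing R]
    (A : Matrix l m R) (B : Matrix m n R) : ‖A * B‖ ≤ Fintype.card m * ‖A‖ * ‖B‖ := by
  refine (norm_le_iff (by positivity)).2 fun i j => ?_
  calc ‖(A * B) i j‖ ≤ ∑ k, ‖A i k * B k j‖ := norm_sum_le _ _
    _ ≤ ∑ _k : m, ‖A‖ * ‖B‖ := Finset.sum_le_sum fun k _ =>
        (norm_mul_le _ _).trans (mul_le_mul (norm_entry_le_entrywise_sup_norm A)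
          (norm_entry_le_entrywise_sup_norm B) (norm_nonneg _) (norm_nonneg _))
    _ = Fintype.card m * ‖A‖ * ‖B‖ := by simp [mul_assoc]

open Set in
theorem eq_zero_of_hasDerivAt_mul_add_mul [Fintype m] [Fintype n]
    {M : ℝ → Matrix m n ℝ} {A : ℝ → Matrix m m ℝ} {B : ℝ → Matrix n n ℝ} {a b : ℝ}
    (hA : ContinuousOn A (Icc a b)) (hB : ContinuousOn B (Icc a b))
    (hM : ∀ t ∈ Icc a b, HasDerivAt M (A t * M t + M t * B t) t) (ha : M a = 0) :
    ∀ t ∈ Icc a b, M t = 0 := by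
  obtain ⟨KA, hKA⟩ := isCompact_Icc.exists_bound_of_continuousOn hA
  obtain ⟨KB, hKB⟩ := isCompact_Icc.exists_bound_of_continuousOn hB
  refine eq_zero_of_abs_deriv_le_mul_abs_self_of_eq_zero_right
    (K := Fintype.card m * KA + Fintype.card n * KB)
    (fun t ht => (hM t ht).continuousAt.continuousWithinAt)
    (fun t ht => (hM t (Ico_subset_Icc_self ht)).hasDerivWithinAt) ha fun t ht => ?_
  have ht := Ico_subset_Icc_self ht
  calc ‖A t * M t + M t * B t‖ ≤ ‖A t * M t‖ + ‖M t * B t‖ := norm_add_le _ _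
    _ ≤ Fintype.card m * ‖A t‖ * ‖M t‖ + Fintype.card n * ‖M t‖ * ‖B t‖ :=
        add_le_add (norm_mul_le_card_mul _ _) (norm_mul_le_card_mul _ _)
    _ ≤ Fintype.card m * KA * ‖M t‖ + Fintype.card n * ‖M t‖ * KB := by
        gcongr
        exacts [hKA t ht, hKB t ht]
    _ = (Fintype.card m * KA + Fintype.card n * KB) * ‖M t‖ := by ring

end Matrix

/-- The f-OTD mode equation preserves orthonormality of the modes: if `L`, `F`, `Φ` are
continuous (entrywise) and `U`, `Y` are continuously differentiable, then
`U(0)ᵀ U(0) = 1` implies `U(t)ᵀ U(t) = 1` for all `t ≥ 0`. -/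
theorem fOTD_preserves_orthonormality {n r d : ℕ}
    (L : ℝ → Matrix (Fin n) (Fin n) ℝ) (F : ℝ → Matrix (Fin n) (Fin d) ℝ)
    (U : ℝ → Matrix (Fin n) (Fin r) ℝ) (Y : ℝ → Matrix (Fin d) (Fin r) ℝ)
    (Φ : ℝ → Matrix (Fin r) (Fin r) ℝ)
    (hred : FOTDReduction L F U Y Φ)
    (hL : ∀ i j, Continuous fun t => L t i j)
    (hF : ∀ i j, Continuous fun t => F t i j)
    (hΦ : ∀ i j, Continuous fun t => Φ t i j)
    (h0 : (U 0)ᵀ * U 0 = 1) :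
    ∀ t : ℝ, 0 ≤ t → (U t)ᵀ * U t = 1 := by
  obtain ⟨hΦ_skew, hdet, hU', hY'⟩ := hred
  set G := fun t => F t * Y t * ((Y t)ᵀ * Y t)⁻¹
  have hU_deriv t : HasDerivAt U
      (L t * U t - U t * ((U t)ᵀ * L t * U t) + (1 - U t * (U t)ᵀ) * G t + U t * Φ t) t := by
    simpa only [G, Matrix.mul_assoc] using hasDerivAt_iff_apply.2 (hU' t)
  have hUc : Continuous U := continuous_iff_continuousAt.2 fun t => (hU_deriv t).continuousAt
  have hYc : Continuous Y :=
    continuous_iff_continuousAt.2 fun t => (hasDerivAt_iff_apply.2 (hY' t)).continuousAt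
  set S := fun t => (U t)ᵀ * L t * U t + (U t)ᵀ * G t
  have hSc : Continuous S := by
    have hGc : Continuous G := ((continuous_matrix hF).matrix_mul hYc).matrix_mul
      ((hYc.matrix_transpose.matrix_mul hYc).matrix_inv hdet)
    exact ((hUc.matrix_transpose.matrix_mul (continuous_matrix hL)).matrix_mul hUc).add
      (hUc.matrix_transpose.matrix_mul hGc)
  have hM t : HasDerivAt (fun s => (U s)ᵀ * U s - 1)
      (-(Φ t + (S t)ᵀ) * ((U t)ᵀ * U t - 1) + ((U t)ᵀ * U t - 1) * (Φ t - S t)) t := by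
    have h := ((hU_deriv t).matrix_transpose.matrix_mul (hU_deriv t)).sub_const 1
    rwa [transpose_mul_add_transpose_mul_eq_of_transpose_eq_neg _ _ _ _ (hΦ_skew t)] at h
  intro t ht
  refine sub_eq_zero.1 (eq_zero_of_hasDerivAt_mul_add_mul ?_ ?_ (fun s _ => hM s)
    (by simp [h0]) t ⟨ht, le_rfl⟩)
  · exact ((continuous_matrix hΦ).add hSc.matrix_transpose).neg.continuousOn
  · exact ((continuous_matrix hΦ).sub hSc).continuousOn
end

section
/- Consider an f-OTD reduction (U, Y) with gauge Φ = 0 and suppose at a time t one has U(t)ᵀ * U(t) = 1 and there exists a matrix B ∈ Matrix (Fin r) (Fin r) ℝ such that L(t)*U(t) + F(t)*Y(t)*C(t)⁻¹ = U(t)*B (i.e., the driving term lies in the span of the current modes). Then U'(t) = 0, i.e., the f-OTD subspace does not evolve at time t. -/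
open Matrix

/-! With zero gauge the mode equation reads `U' = (1 - U Uᵀ) (L U + F Y C⁻¹)`; under the span
hypothesis this is `(1 - U Uᵀ) U B`, which vanishes because `1 - U Uᵀ` kills the columns of `U`
when `Uᵀ U = 1`. -/

section ModeProjection

variable {R m n k : Type*} [Ring R] [Fintype m] [Fintype n] [DecidableEq m]

theorem mul_sub_mul_transpose_mul_add_one_sub_mul_transpose_mul
    (A : Matrix m m R) (U : Matrix m n R) (G : Matrix m n R) :
    A * U - U * (Uᵀ * A * U) + (1 - U * Uᵀ) * G = (1 - U * Uᵀ) * (A * U + G) := by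
  simp only [Matrix.mul_add, Matrix.sub_mul, Matrix.one_mul, Matrix.mul_assoc]

theorem one_sub_mul_transpose_mul_mul_eq_zero [DecidableEq n] {U : Matrix m n R}
    (hU : Uᵀ * U = 1) (B : Matrix n k R) : (1 - U * Uᵀ) * (U * B) = 0 := by
  rw [Matrix.sub_mul, Matrix.one_mul, Matrix.mul_assoc, ← Matrix.mul_assoc Uᵀ, hU,
    Matrix.one_mul, sub_self]

end ModeProjection

/-- If at time `t` the modes are orthonormal and the driving term
`L(t) U(t) + F(t) Y(t) C(t)⁻¹` lies in the span of the current modes (i.e. equals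
`U(t) B` for some `B`), then the f-OTD subspace (with zero gauge) does not evolve at
time `t`: `U'(t) = 0`. -/
theorem fOTD_subspace_stationary {n r d : ℕ}
    (L : ℝ → Matrix (Fin n) (Fin n) ℝ) (F : ℝ → Matrix (Fin n) (Fin d) ℝ)
    (U : ℝ → Matrix (Fin n) (Fin r) ℝ) (Y : ℝ → Matrix (Fin d) (Fin r) ℝ)
    (hred : FOTDReduction L F U Y (fun _ => (0 : Matrix (Fin r) (Fin r) ℝ)))
    (t : ℝ) (hortho : (U t)ᵀ * U t = 1)
    (B : Matrix (Fin r) (Fin r) ℝ)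
    (hspan : L t * U t + F t * Y t * ((Y t)ᵀ * Y t)⁻¹ = U t * B) :
    ∀ (i : Fin n) (j : Fin r), HasDerivAt (fun s => U s i j) (0 : ℝ) t := by
  intro i j
  have hrhs : L t * U t - U t * ((U t)ᵀ * L t * U t)
      + (1 - U t * (U t)ᵀ) * F t * Y t * ((Y t)ᵀ * Y t)⁻¹
      + U t * (0 : Matrix (Fin r) (Fin r) ℝ) = 0 := by
    rw [Matrix.mul_zero, add_zero, Matrix.mul_assoc _ (F t), Matrix.mul_assoc _ (F t * Y t),
      mul_sub_mul_transpose_mul_add_one_sub_mul_transpose_mul, hspan,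
      one_sub_mul_transpose_mul_mul_eq_zero hortho]
  simpa only [hrhs, Matrix.zero_apply] using hred.2.2.1 t i j
end

section
/- Let (U, Y) be an f-OTD reduction with gauge Φ. Then the low-rank approximation V̂(t) := U(t) * Y(t)ᵀ satisfies, for all t, the evolution equation V̂'(t) = L(t)*V̂(t) + U(t)*U(t)ᵀ*F(t) + (1 - U(t)*U(t)ᵀ)*F(t)*Y(t)*C(t)⁻¹*Y(t)ᵀ. In particular, the evolution of the product U(t)Y(t)ᵀ does not depend on the gauge Φ. -/
open Matrix

theorem Matrix.hasDerivAt_mul_apply {𝕜 : Type*} [NontriviallyNormedField 𝕜]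
    {m l p : Type*} [Fintype l] {A : 𝕜 → Matrix m l 𝕜} {B : 𝕜 → Matrix l p 𝕜} {A' : Matrix m l 𝕜}
    {B' : Matrix l p 𝕜} {t : 𝕜}
    (hA : ∀ i k, HasDerivAt (fun s => A s i k) (A' i k) t)
    (hB : ∀ k j, HasDerivAt (fun s => B s k j) (B' k j) t) (i : m) (j : p) :
    HasDerivAt (fun s => (A s * B s) i j) ((A' * B t + A t * B') i j) t := by
  simp only [add_apply, mul_apply, ← Finset.sum_add_distrib]
  exact HasDerivAt.fun_sum fun k _ => (hA i k).mul (hB k j)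

/-- The gauge terms `U Φ Yᵀ` and `U (Y Φ)ᵀ` cancel by skew-symmetry of `Φ`, as do the
terms `∓ U Uᵀ L U Yᵀ` coming from the reduced operator. -/
theorem fOTD_mul_transpose_add_mul_transpose_eq {R : Type*} [CommRing R]
    {n r d : Type*} [Fintype n] [Fintype r] [Fintype d]
    (L : Matrix n n R) (F : Matrix n d R) (U : Matrix n r R) (Y : Matrix d r R)
    (Φ : Matrix r r R) (N : Matrix n r R) (hΦ : Φᵀ = -Φ) :
    (L * U - U * (Uᵀ * L * U) + N + U * Φ) * Yᵀ
        + U * (Y * (Uᵀ * L * U)ᵀ + Fᵀ * U + Y * Φ)ᵀ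
      = L * (U * Yᵀ) + U * Uᵀ * F + N * Yᵀ := by
  simp only [transpose_add, transpose_mul, transpose_transpose, hΦ, Matrix.sub_mul,
    Matrix.add_mul, Matrix.mul_add, Matrix.mul_neg, Matrix.neg_mul, Matrix.mul_assoc]
  abel

/-- The low-rank approximation `V̂(t) = U(t) Y(t)ᵀ` of an f-OTD reduction satisfies the
gauge-independent evolution equation
`V̂' = L V̂ + U Uᵀ F + (1 - U Uᵀ) F Y C⁻¹ Yᵀ` (entrywise derivatives). -/
theorem fOTD_lowRank_evolution {n r d : ℕ}
    (L : ℝ → Matrix (Fin n) (Fin n) ℝ) (F : ℝ → Matrix (Fin n) (Fin d) ℝ)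
    (U : ℝ → Matrix (Fin n) (Fin r) ℝ) (Y : ℝ → Matrix (Fin d) (Fin r) ℝ)
    (Φ : ℝ → Matrix (Fin r) (Fin r) ℝ)
    (hred : FOTDReduction L F U Y Φ) :
    ∀ (t : ℝ) (i : Fin n) (j : Fin d),
      HasDerivAt (fun s => (U s * (Y s)ᵀ) i j)
        (((L t * (U t * (Y t)ᵀ) + U t * (U t)ᵀ * F t
          + (1 - U t * (U t)ᵀ) * F t * Y t * ((Y t)ᵀ * Y t)⁻¹ * (Y t)ᵀ
          : Matrix (Fin n) (Fin d) ℝ)) i j) t := by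
  intro t i j
  obtain ⟨hΦ, -, hU, hY⟩ := hred
  rw [← fOTD_mul_transpose_add_mul_transpose_eq _ _ _ _ _ _ (hΦ t)]
  exact Matrix.hasDerivAt_mul_apply (hU t) (fun k j => hY t j k) i j
end

section
/- (Exactness of f-OTD, paper's Theorem 2, finite-dimensional form.) Let L and F be continuous, let V : ℝ → Matrix (Fin n) (Fin d) ℝ be continuously differentiable and satisfy the forced sensitivity equation V'(t) = L(t)*V(t) + F(t) for all t ∈ [0, T], and let (U, Y) be an f-OTD reduction with gauge Φ, continuously differentiable, in the full-rank case r = d with Y(t) invertible for all t ∈ [0, T]. If initially V(0) = U(0) * Y(0)ᵀ, then V(t) = U(t) * Y(t)ᵀ for all t ∈ [0, T]. -/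
/-!
The product `W = U Yᵀ` solves the same forced sensitivity equation `W' = L W + F` as `V`: in the
product rule the Galerkin terms `U L_r` cancel, the gauge terms cancel because `Φ` is
skew-symmetric, and since `Y` is square and invertible, `Y (YᵀY)⁻¹ Yᵀ = 1` makes the projected
forcing `(1 - U Uᵀ) F` and the term `U Uᵀ F` coming from `Y'` add up to `F`. As `V` and `W` agree
at `t = 0`, uniqueness for linear ODEs with continuous coefficients gives `V = W` on `[0, T]`.
-/

open Matrix

open Set

namespace Matrix

section LinftyOpNorm

attribute [local instance] Matrix.linftyOpNormedAddCommGroup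

theorem eqOn_of_hasDerivAt_mulVec_add {m : Type*} [Fintype m] {A : ℝ → Matrix m m ℝ}
    {b x y : ℝ → m → ℝ} {T : ℝ} (hA : ContinuousOn A (Icc 0 T))
    (hx : ∀ t ∈ Icc 0 T, HasDerivAt x (A t *ᵥ x t + b t) t)
    (hy : ∀ t ∈ Icc 0 T, HasDerivAt y (A t *ᵥ y t + b t) t) (h0 : x 0 = y 0) :
    EqOn x y (Icc 0 T) := by
  obtain ⟨K, hK⟩ := isCompact_Icc.exists_bound_of_continuousOn hA
  have hlip : ∀ t ∈ Icc 0 T, LipschitzWith K.toNNReal (fun z => A t *ᵥ z + b t) := fun t ht =>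
    LipschitzWith.of_dist_le' fun z w => by
      rw [dist_eq_norm, dist_eq_norm, add_sub_add_right_eq_sub, ← mulVec_sub]
      exact (linfty_opNorm_mulVec _ _).trans (by gcongr; exact hK t ht)
  exact ODE_solution_unique_of_mem_Icc_right (s := fun _ => univ)
    (fun t ht => (hlip t (Ico_subset_Icc_self ht)).lipschitzOnWith)
    (fun t ht => (hx t ht).continuousAt.continuousWithinAt)
    (fun t ht => (hx t (Ico_subset_Icc_self ht)).hasDerivWithinAt) (fun _ _ => trivial)
    (fun t ht => (hy t ht).continuousAt.continuousWithinAt)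
    (fun t ht => (hy t (Ico_subset_Icc_self ht)).hasDerivWithinAt) (fun _ _ => trivial) h0

end LinftyOpNorm

theorem eqOn_of_hasDerivAt_mul_add {m p : Type*} [Fintype m] {A : ℝ → Matrix m m ℝ}
    {B X Z : ℝ → Matrix m p ℝ} {T : ℝ} (hA : ContinuousOn A (Icc 0 T))
    (hX : ∀ t ∈ Icc 0 T, ∀ i j, HasDerivAt (fun s => X s i j) ((A t * X t + B t) i j) t)
    (hZ : ∀ t ∈ Icc 0 T, ∀ i j, HasDerivAt (fun s => Z s i j) ((A t * Z t + B t) i j) t)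
    (h0 : X 0 = Z 0) : EqOn X Z (Icc 0 T) := by
  intro t ht
  ext i j
  have hcol (W : ℝ → Matrix m p ℝ)
      (hW : ∀ t ∈ Icc 0 T, ∀ i j, HasDerivAt (fun s => W s i j) ((A t * W t + B t) i j) t) :
      ∀ t ∈ Icc 0 T,
        HasDerivAt (fun s i => W s i j) (A t *ᵥ (fun i => W t i j) + fun i => B t i j) t :=
    fun t ht => hasDerivAt_pi.2 fun i => by simpa [mul_apply, mulVec, dotProduct] using hW t ht i j
  exact congrFun (eqOn_of_hasDerivAt_mulVec_add hA (hcol X hX) (hcol Z hZ) (by simp [h0]) ht) i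

theorem hasDerivAt_mul_apply_s7 {l m n : Type*} [Fintype m] {A : ℝ → Matrix l m ℝ}
    {B : ℝ → Matrix m n ℝ} {A' : Matrix l m ℝ} {B' : Matrix m n ℝ} {t : ℝ}
    (hA : ∀ i j, HasDerivAt (fun s => A s i j) (A' i j) t)
    (hB : ∀ i j, HasDerivAt (fun s => B s i j) (B' i j) t) (i : l) (j : n) :
    HasDerivAt (fun s => (A s * B s) i j) ((A' * B t + A t * B') i j) t := by
  simp only [add_apply, mul_apply, ← Finset.sum_add_distrib]
  exact HasDerivAt.fun_sum fun k _ => (hA i k).mul (hB k j)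

theorem mul_inv_transpose_mul_self_mul_transpose {n R : Type*} [Fintype n] [DecidableEq n]
    [CommRing R] {Y : Matrix n n R} (hY : IsUnit Y.det) :
    Y * ((Yᵀ * Y)⁻¹ * Yᵀ) = 1 := by
  rw [mul_inv_rev, Matrix.mul_assoc, nonsing_inv_mul _ (by rwa [det_transpose]), Matrix.mul_one,
    mul_nonsing_inv _ hY]

end Matrix

section FOTDField

variable {R : Type*} [CommRing R] {n r d : Type*} [Fintype n] [Fintype r] [Fintype d]
  [DecidableEq n] [DecidableEq r]

noncomputable def fOTDModeField (L : Matrix n n R) (F : Matrix n d R) (U : Matrix n r R)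
    (Y : Matrix d r R) (Φ : Matrix r r R) : Matrix n r R :=
  L * U - U * (Uᵀ * L * U) + (1 - U * Uᵀ) * F * Y * (Yᵀ * Y)⁻¹ + U * Φ

def fOTDCoeffField (L : Matrix n n R) (F : Matrix n d R) (U : Matrix n r R)
    (Y : Matrix d r R) (Φ : Matrix r r R) : Matrix d r R :=
  Y * (Uᵀ * L * U)ᵀ + Fᵀ * U + Y * Φ

theorem fOTDModeField_mul_transpose_add {L : Matrix n n R} {F U : Matrix n r R}
    {Y Φ : Matrix r r R} (hΦ : Φᵀ = -Φ) (hY : IsUnit Y.det) :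
    fOTDModeField L F U Y Φ * Yᵀ + U * (fOTDCoeffField L F U Y Φ)ᵀ = L * (U * Yᵀ) + F := by
  simp only [fOTDModeField, fOTDCoeffField, transpose_add, transpose_mul, transpose_transpose, hΦ,
    Matrix.neg_mul, Matrix.mul_neg, Matrix.add_mul, Matrix.sub_mul, Matrix.mul_add,
    Matrix.one_mul, Matrix.mul_one, Matrix.mul_assoc, mul_inv_transpose_mul_self_mul_transpose hY]
  abel

end FOTDField

theorem fOTD_exactness_general {n d : ℕ} (T : ℝ)
    (L : ℝ → Matrix (Fin n) (Fin n) ℝ) (F : ℝ → Matrix (Fin n) (Fin d) ℝ)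
    (hL : ∀ i j, Continuous fun t => L t i j)
    (V : ℝ → Matrix (Fin n) (Fin d) ℝ) (V' : ℝ → Matrix (Fin n) (Fin d) ℝ)
    (hV : ∀ (t : ℝ) (i : Fin n) (j : Fin d),
      HasDerivAt (fun s => V s i j) (V' t i j) t)
    (hVode : ∀ t ∈ Set.Icc (0 : ℝ) T, V' t = L t * V t + F t)
    (U : ℝ → Matrix (Fin n) (Fin d) ℝ) (Y : ℝ → Matrix (Fin d) (Fin d) ℝ)
    (Φ : ℝ → Matrix (Fin d) (Fin d) ℝ)
    (hred : FOTDReduction L F U Y Φ)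
    (hYinv : ∀ t ∈ Set.Icc (0 : ℝ) T, IsUnit (Y t).det)
    (h0 : V 0 = U 0 * (Y 0)ᵀ) :
    ∀ t ∈ Set.Icc (0 : ℝ) T, V t = U t * (Y t)ᵀ := by
  obtain ⟨hΦ, -, hU, hY⟩ := hred
  have hUY : ∀ t ∈ Icc (0 : ℝ) T, ∀ i j,
      HasDerivAt (fun s => (U s * (Y s)ᵀ) i j) ((L t * (U t * (Y t)ᵀ) + F t) i j) t := by
    intro t ht i j
    rw [← fOTDModeField_mul_transpose_add (hΦ t) (hYinv t ht)]
    exact hasDerivAt_mul_apply_s7 (hU t) (fun i j => hY t j i) i j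
  refine eqOn_of_hasDerivAt_mul_add (continuous_matrix hL).continuousOn
    (fun t ht i j => ?_) hUY h0
  rw [← hVode t ht]
  exact hV t i j

/-- Exactness of f-OTD (paper's Theorem 2, finite-dimensional form): let `L, F` be
continuous, let `V` be continuously differentiable and satisfy the forced sensitivity
equation `V' = L V + F` on `[0, T]`, and let `(U, Y)` be a continuously differentiable
f-OTD reduction with gauge `Φ` in the full-rank case `r = d`, with `Y(t)` invertible
on `[0, T]`. If `V(0) = U(0) Y(0)ᵀ`, then `V(t) = U(t) Y(t)ᵀ` on `[0, T]`. -/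
theorem fOTD_exactness {n d : ℕ} (T : ℝ)
    (L : ℝ → Matrix (Fin n) (Fin n) ℝ) (F : ℝ → Matrix (Fin n) (Fin d) ℝ)
    (hL : ∀ i j, Continuous fun t => L t i j)
    (hF : ∀ i j, Continuous fun t => F t i j)
    (V : ℝ → Matrix (Fin n) (Fin d) ℝ) (V' : ℝ → Matrix (Fin n) (Fin d) ℝ)
    (hV : ∀ (t : ℝ) (i : Fin n) (j : Fin d),
      HasDerivAt (fun s => V s i j) (V' t i j) t)
    (hV' : ∀ i j, Continuous fun t => V' t i j)
    (hVode : ∀ t ∈ Set.Icc (0 : ℝ) T, V' t = L t * V t + F t)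
    (U : ℝ → Matrix (Fin n) (Fin d) ℝ) (Y : ℝ → Matrix (Fin d) (Fin d) ℝ)
    (Φ : ℝ → Matrix (Fin d) (Fin d) ℝ)
    (hΦ : ∀ i j, Continuous fun t => Φ t i j)
    (hred : FOTDReduction L F U Y Φ)
    (hYinv : ∀ t ∈ Set.Icc (0 : ℝ) T, IsUnit (Y t).det)
    (h0 : V 0 = U 0 * (Y 0)ᵀ) :
    ∀ t ∈ Set.Icc (0 : ℝ) T, V t = U t * (Y t)ᵀ :=
  fOTD_exactness_general T L F hL V V' hV hVode U Y Φ hred hYinv h0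
end

section
/- Let L : ℝ → Matrix (Fin n) (Fin n) ℝ, F : ℝ → Matrix (Fin n) (Fin d) ℝ, and let U : ℝ → Matrix (Fin n) (Fin d) ℝ and Y : ℝ → Matrix (Fin d) (Fin d) ℝ be differentiable with C(t) := Y(t)ᵀ*Y(t) invertible for all t. Write L_r(t) := U(t)ᵀ*L(t)*U(t). Suppose that for all t the product satisfies the forced sensitivity equation, d/dt (U(t)*Y(t)ᵀ) = L(t)*U(t)*Y(t)ᵀ + F(t), and that the coefficients satisfy Y'(t) = Y(t)*L_r(t)ᵀ + F(t)ᵀ*U(t). Then the modes necessarily satisfy the f-OTD mode equation with zero gauge: U'(t) = L(t)*U(t) - U(t)*L_r(t) + (F(t)*Y(t) - U(t)*U(t)ᵀ*F(t)*Y(t))*C(t)⁻¹ for all t. -/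
open Matrix

/-!
Differentiating `U Yᵀ` by the product rule gives `U' Yᵀ + U Y'ᵀ = L U Yᵀ + F`. Substituting the
coefficient equation for `Y'` leaves `U' Yᵀ = (L U - U L_r) Yᵀ + (1 - U Uᵀ) F`, and since
`Y (Yᵀ Y)⁻¹` is a right inverse of `Yᵀ`, this determines `U'`.
-/

theorem HasDerivAt.matrix_mul_apply {𝕜 : Type*} [NontriviallyNormedField 𝕜]
    {l m p : Type*} [Fintype m] {A : 𝕜 → Matrix l m 𝕜} {B : 𝕜 → Matrix m p 𝕜}
    {A' : Matrix l m 𝕜} {B' : Matrix m p 𝕜} {t : 𝕜}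
    (hA : ∀ i k, HasDerivAt (fun s => A s i k) (A' i k) t)
    (hB : ∀ k j, HasDerivAt (fun s => B s k j) (B' k j) t) (i : l) (j : p) :
    HasDerivAt (fun s => (A s * B s) i j) ((A' * B t + A t * B') i j) t := by
  simp only [mul_apply, Matrix.add_apply, ← Finset.sum_add_distrib]
  exact HasDerivAt.fun_sum fun k _ => (hA i k).fun_mul (hB k j)

theorem Matrix.eq_add_mul_mul_inv_of_mul_transpose_eq {R : Type*} [CommRing R]
    {l m p : Type*} [Fintype m] [DecidableEq m] [Fintype p]
    {X A : Matrix l m R} {B : Matrix l p R} {Y : Matrix p m R} (hY : IsUnit (Yᵀ * Y).det)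
    (h : X * Yᵀ = A * Yᵀ + B) :
    X = A + B * Y * (Yᵀ * Y)⁻¹ := by
  have hgram : Yᵀ * Y * (Yᵀ * Y)⁻¹ = 1 := mul_nonsing_inv _ hY
  calc X = X * (Yᵀ * Y * (Yᵀ * Y)⁻¹) := by rw [hgram, Matrix.mul_one]
    _ = (X * Yᵀ) * Y * (Yᵀ * Y)⁻¹ := by simp only [Matrix.mul_assoc]
    _ = A + B * Y * (Yᵀ * Y)⁻¹ := by
      rw [h, Matrix.add_mul, Matrix.add_mul, Matrix.mul_assoc A, Matrix.mul_assoc A, hgram,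
        Matrix.mul_one]

/-- Appendix C computation of the paper: if the rank-`d` product `U(t) Y(t)ᵀ` evolves by
the full forced linear sensitivity dynamics `V' = L V + F` and the coefficient matrix
`Y` evolves by the f-OTD coefficient equation, then the basis factor `U` necessarily
evolves by the f-OTD mode equation with zero gauge. -/
theorem fOTD_mode_equation_necessary {n d : ℕ}
    (L : ℝ → Matrix (Fin n) (Fin n) ℝ) (F : ℝ → Matrix (Fin n) (Fin d) ℝ)
    (U : ℝ → Matrix (Fin n) (Fin d) ℝ) (U' : ℝ → Matrix (Fin n) (Fin d) ℝ)
    (Y : ℝ → Matrix (Fin d) (Fin d) ℝ) (Y' : ℝ → Matrix (Fin d) (Fin d) ℝ)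
    (hU : ∀ (t : ℝ) (i : Fin n) (j : Fin d), HasDerivAt (fun s => U s i j) (U' t i j) t)
    (hY : ∀ (t : ℝ) (i j : Fin d), HasDerivAt (fun s => Y s i j) (Y' t i j) t)
    (hC : ∀ t : ℝ, IsUnit ((Y t)ᵀ * Y t).det)
    (hprod : ∀ (t : ℝ) (i : Fin n) (j : Fin d),
      HasDerivAt (fun s => (U s * (Y s)ᵀ) i j)
        (((L t * (U t * (Y t)ᵀ) + F t : Matrix (Fin n) (Fin d) ℝ)) i j) t)
    (hYode : ∀ t : ℝ, Y' t = Y t * ((U t)ᵀ * L t * U t)ᵀ + (F t)ᵀ * U t) :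
    ∀ t : ℝ, U' t = L t * U t - U t * ((U t)ᵀ * L t * U t)
      + (F t * Y t - U t * (U t)ᵀ * (F t * Y t)) * ((Y t)ᵀ * Y t)⁻¹ := by
  intro t
  have hproduct_rule : U' t * (Y t)ᵀ + U t * (Y' t)ᵀ = L t * (U t * (Y t)ᵀ) + F t :=
    ext fun i j => (HasDerivAt.matrix_mul_apply (hU t) (fun k j => hY t j k) i j).unique
      (hprod t i j)
  have hfactored : U' t * (Y t)ᵀ = (L t * U t - U t * ((U t)ᵀ * L t * U t)) * (Y t)ᵀ
      + (F t - U t * (U t)ᵀ * F t) := by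
    rw [eq_sub_of_add_eq hproduct_rule, hYode t]
    simp only [transpose_add, transpose_mul, transpose_transpose, Matrix.mul_add,
      Matrix.sub_mul, Matrix.mul_assoc]
    abel
  rw [eq_add_mul_mul_inv_of_mul_transpose_eq (hC t) hfactored, Matrix.sub_mul (F t),
    Matrix.mul_assoc (U t * (U t)ᵀ) (F t)]
end
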